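/- For an element t = (t_1,...,t_{p-1}) of T^{p-1}, the equation ρ(a)(t) = t holds if and only if t_k = t_1^k for all 1 ≤ k ≤ p-1 and t_1^p = 1. Consequently the fixed-point subgroup of the ρ-action of C_p on T^{p-1} is the cyclic group of order p generated by (ξ_p, ξ_p^2, ..., ξ_p^{p-1}). -/
import Mathlib

open Real in
lemma circ_coe_pow' (x : Circle) (n : ℕ) : ((x^n : Circle) : ℂ) = (x:ℂ)^n :=
  map_pow Circle.coeHom x n

open Real in
lemma circ_exp_pow_p (p : ℕ) (hp : p.Prime) : (Circle.exp (2 * π / p)) ^ p = 1 := by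
  have hp0 : (p:ℂ) ≠ 0 := Nat.cast_ne_zero.mpr hp.ne_zero
  ext
  rw [circ_coe_pow', Circle.coe_exp, ← Complex.exp_nat_mul, Circle.coe_one,
    show (p:ℂ) * (↑(2*π/p) * Complex.I) = 2*π*Complex.I by push_cast; field_simp]
  exact Complex.exp_two_pi_mul_I

open Real in
lemma circ_root (p : ℕ) (hp : p.Prime) (x : Circle) (hx : x ^ p = 1) :
    ∃ m : ℕ, x = (Circle.exp (2 * π / p)) ^ m := by
  haveI : NeZero p := ⟨hp.ne_zero⟩
  have hc : (x:ℂ) ^ p = 1 := by rw [← circ_coe_pow', hx, Circle.coe_one]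
  obtain ⟨m, -, hm⟩ := (Complex.isPrimitiveRoot_exp p hp.ne_zero).eq_pow_of_pow_eq_one hc
  refine ⟨m, ?_⟩
  ext
  rw [circ_coe_pow', Circle.coe_exp, ← hm]
  congr 1
  push_cast
  ring

open Real in
theorem stmt_6 (p : ℕ) (hp : p.Prime)
    (ρa : (Fin (p - 1) → Circle) → (Fin (p - 1) → Circle))
    (hρa : ∀ (t : Fin (p - 1) → Circle) (i : Fin (p - 1)),
      ρa t i =
        if (i : ℕ) = 0 then (t ⟨p - 2, by have := i.isLt; omega⟩)⁻¹
        else t ⟨(i : ℕ) - 1, by have := i.isLt; omega⟩ * (t ⟨p - 2, by have := i.isLt; omega⟩)⁻¹)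
    (i0 : Fin (p - 1)) (hi0 : (i0 : ℕ) = 0) :
    (∀ t : Fin (p - 1) → Circle,
      ρa t = t ↔ ((∀ k : Fin (p - 1), t k = (t i0) ^ ((k : ℕ) + 1)) ∧ (t i0) ^ p = 1))
    ∧ {t : Fin (p - 1) → Circle | ρa t = t} =
        ↑(Subgroup.zpowers (fun i : Fin (p - 1) => (Circle.exp (2 * π / p)) ^ ((i : ℕ) + 1))) := by
  have hp2 : 2 ≤ p := hp.two_le
  have hlt0 : 0 < p - 1 := by omega
  have hlt : p - 2 < p - 1 := by omega
  set ξ := Circle.exp (2 * π / p) with hξdef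
  have hξp : ξ ^ p = 1 := circ_exp_pow_p p hp
  have key : ∀ t : Fin (p-1) → Circle,
      ρa t = t ↔ ((∀ k : Fin (p-1), t k = (t i0) ^ ((k:ℕ)+1)) ∧ (t i0)^p = 1) := by
    intro t
    constructor
    · intro h
      have hlast : t ⟨p-2, hlt⟩ = (t i0)⁻¹ := by
        have h0 := congrFun h i0
        rw [hρa, if_pos hi0] at h0
        rw [← h0, inv_inv]
      have hstep : ∀ n, 1 ≤ n → ∀ hn : n < p-1,
          t ⟨n, hn⟩ = t ⟨n-1, by omega⟩ * t i0 := by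
        intro n hn1 hn
        have h0 := congrFun h ⟨n, hn⟩
        rw [hρa] at h0
        simp only [show ((⟨n, hn⟩ : Fin (p-1)) : ℕ) = n from rfl,
          if_neg (by omega : ¬ n = 0)] at h0
        rw [← h0, hlast, inv_inv]
      have main : ∀ n, ∀ hn : n < p-1, t ⟨n, hn⟩ = (t i0) ^ (n+1) := by
        intro n
        induction n with
        | zero =>
          intro hn
          have : (⟨0, hn⟩ : Fin (p-1)) = i0 := by
            apply Fin.ext; simp [hi0]
          rw [this, pow_one]
        | succ n ih =>
          intro hn
          rw [hstep (n+1) (by omega) hn]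
          simp only [Nat.add_sub_cancel]
          rw [ih (by omega), ← pow_succ]
      have hfin : (t i0)^p = 1 := by
        have h1 : t ⟨p-2, hlt⟩ = (t i0)^(p-1) := by
          have := main (p-2) hlt
          rwa [show p-2+1 = p-1 by omega] at this
        have h2 : (t i0)⁻¹ = (t i0)^(p-1) := by rw [← hlast, h1]
        calc (t i0)^p = (t i0)^(p-1) * t i0 := by
              rw [← pow_succ]; congr 1; omega
          _ = (t i0)⁻¹ * t i0 := by rw [h2]
          _ = 1 := inv_mul_cancel _
      exact ⟨fun k => by have := main k k.isLt; simpa using this, hfin⟩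
    · rintro ⟨h1, h2⟩
      have hlastv : t ⟨p-2, hlt⟩ = (t i0)⁻¹ := by
        rw [h1 ⟨p-2, hlt⟩]
        simp only [show ((⟨p-2, hlt⟩ : Fin (p-1)) : ℕ) = p - 2 from rfl]
        rw [eq_inv_iff_mul_eq_one, ← pow_succ, show p-2+1+1 = p by omega]
        exact h2
      funext i
      rw [hρa]
      by_cases hi : (i:ℕ) = 0
      · rw [if_pos hi, hlastv, inv_inv]
        congr 1
        apply Fin.ext; omega
      · rw [if_neg hi, hlastv, inv_inv]
        rw [h1 ⟨(i:ℕ)-1, by have := i.isLt; omega⟩, h1 i]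
        simp only [show ∀ h, ((⟨(i:ℕ)-1, h⟩ : Fin (p-1)) : ℕ) = (i:ℕ) - 1 from fun _ => rfl]
        rw [← pow_succ]
        congr 1
        omega
  refine ⟨key, ?_⟩
  ext t
  simp only [Set.mem_setOf_eq, SetLike.mem_coe, Subgroup.mem_zpowers_iff, key]
  constructor
  · rintro ⟨h1, h2⟩
    obtain ⟨m, hm⟩ := circ_root p hp (t i0) h2
    refine ⟨(m:ℤ), funext fun k => ?_⟩
    rw [Pi.pow_apply, h1 k, hm]
    rw [← zpow_natCast ξ m, ← zpow_natCast (ξ ^ (m:ℤ)), ← zpow_mul,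
      ← zpow_natCast ξ ((k:ℕ)+1), ← zpow_mul, mul_comm]
  · rintro ⟨m, rfl⟩
    have hg0 : ((fun i : Fin (p-1) => ξ^((i:ℕ)+1)) ^ m) i0 = ξ ^ m := by
      rw [Pi.pow_apply, hi0, pow_one]
    constructor
    · intro k
      rw [Pi.pow_apply, hg0, ← zpow_natCast (ξ ^ m), ← zpow_natCast ξ ((k:ℕ)+1),
        ← zpow_mul, ← zpow_mul, mul_comm]
    · rw [hg0, ← zpow_natCast (ξ ^ m), ← zpow_mul, mul_comm, zpow_mul,
        zpow_natCast, hξp, one_zpow]
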